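/- Let λ be a nonempty partition and n a positive integer. Then the number of semistandard Young tableaux of shape λ with entries in {1, …, n} equals the number of semistandard Young tableaux of shape λ̃ = (n·|λ|, λ_1, λ_2, …) and content μ = (|λ|, |λ|, …, |λ|) (n+1 parts each equal to |λ|). -/

import Mathlib

/-!
Push a tableau `T` of shape `λ` down one row and add `1` to every entry. To reach content
`(|λ|^{n+1})` it still lacks `|λ| - #{entries of T equal to v}` copies of `v + 1` for each
`v ≤ n`, `n·|λ|` entries in all; in weakly increasing order they form the new top row.
Its first `|λ| ≥ λ₁` entries are `1`, so the columns stay strict.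

Conversely, column strictness forces every entry below the top row of a tableau of shape `λ̃`
to be at least `2`, so deleting the top row and subtracting `1` gives back a tableau with entries
in `{1, …, n}`. The top row is weakly increasing, hence determined by its content, which is the
prescribed content minus that of the rows below: the two constructions are mutually inverse.
-/

open scoped BigOperators

/-- A partition, 0-indexed: `p i` is the part `λ_{i+1}`; weakly decreasing, eventually zero. -/
def IsPartition (p : ℕ → ℕ) : Prop :=
  (∀ i, p (i + 1) ≤ p i) ∧ ∃ N, p N = 0

/-- `|λ| = ∑ᵢ λᵢ`. -/
noncomputable def psize (p : ℕ → ℕ) : ℕ := ∑ᶠ i, p i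

/-- A semistandard Young tableau of shape `λ` (0-indexed rows/columns: the box in row `r`,
column `c` belongs to the diagram iff `c < p r`) with entries in `{1, …, n}`: rows weakly
increase, columns strictly increase, and entries vanish outside the diagram. -/
structure SSYT (p : ℕ → ℕ) (n : ℕ) where
  entry : ℕ → ℕ → ℕ
  pos : ∀ r c, c < p r → 1 ≤ entry r c
  le_bound : ∀ r c, c < p r → entry r c ≤ n
  row_weak : ∀ r c₁ c₂, c₁ ≤ c₂ → c₂ < p r → entry r c₁ ≤ entry r c₂
  col_strict : ∀ r₁ r₂ c, r₁ < r₂ → c < p r₂ → entry r₁ c < entry r₂ c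
  zero_outside : ∀ r c, p r ≤ c → entry r c = 0

/-- A semistandard Young tableau of shape `λ` and content `μ` (0-indexed: exactly `μ i`
entries are equal to `i + 1`). -/
structure SSYTContent (p : ℕ → ℕ) (μ : ℕ → ℕ) where
  entry : ℕ → ℕ → ℕ
  pos : ∀ r c, c < p r → 1 ≤ entry r c
  row_weak : ∀ r c₁ c₂, c₁ ≤ c₂ → c₂ < p r → entry r c₁ ≤ entry r c₂
  col_strict : ∀ r₁ r₂ c, r₁ < r₂ → c < p r₂ → entry r₁ c < entry r₂ c
  zero_outside : ∀ r c, p r ≤ c → entry r c = 0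
  content : ∀ i : ℕ, Nat.card {x : ℕ × ℕ | x.2 < p x.1 ∧ entry x.1 x.2 = i + 1} = μ i

open Finset

theorem List.count_map_range (f : ℕ → ℕ) (m w : ℕ) :
    ((List.range m).map f).count w = #{c ∈ Finset.range m | f c = w} := by
  rw [← Multiset.coe_count, ← Multiset.map_coe, Multiset.count_map, Finset.card_def,
    Finset.filter_val, Finset.range_val]
  simp only [eq_comm]
  rfl

theorem List.pairwise_le_map_range {f : ℕ → ℕ} {m : ℕ} (hf : MonotoneOn f (Set.Iio m)) :
    ((List.range m).map f).Pairwise (· ≤ ·) :=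
  List.pairwise_map.2 <| List.pairwise_lt_range.imp_of_mem fun ha hb hab =>
    hf (List.mem_range.1 ha) (List.mem_range.1 hb) hab.le

theorem eqOn_Iio_of_card_filter_eq {f g : ℕ → ℕ} {m : ℕ} (hf : MonotoneOn f (Set.Iio m))
    (hg : MonotoneOn g (Set.Iio m))
    (h : ∀ w, #{c ∈ range m | f c = w} = #{c ∈ range m | g c = w}) :
    Set.EqOn f g (Set.Iio m) := by
  have hperm : ((List.range m).map f).Perm ((List.range m).map g) :=
    List.perm_iff_count.2 fun w => by rw [List.count_map_range, List.count_map_range, h]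
  have heq := hperm.eq_of_pairwise' (List.pairwise_le_map_range hf)
    (List.pairwise_le_map_range hg)
  intro c hc
  have hc : c < m := hc
  simpa [List.getElem?_range hc] using congrArg (·[c]?) heq

theorem Set.Finite.ncard_eq_ncard_zero_add_ncard_succ {S : Set (ℕ × ℕ)} (hS : S.Finite) :
    S.ncard = {c | (0, c) ∈ S}.ncard + {x : ℕ × ℕ | (x.1 + 1, x.2) ∈ S}.ncard := by
  have hsplit : S = (Prod.mk 0) '' {c | (0, c) ∈ S} ∪
      Prod.map Nat.succ (id : ℕ → ℕ) '' {x : ℕ × ℕ | (x.1 + 1, x.2) ∈ S} := by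
    ext ⟨_ | r, c⟩ <;> simp
  have hinj : Function.Injective (Prod.map Nat.succ (id : ℕ → ℕ)) :=
    Nat.succ_injective.prodMap Function.injective_id
  have hdisj : Disjoint (Prod.mk 0 '' {c | (0, c) ∈ S})
      (Prod.map Nat.succ (id : ℕ → ℕ) '' {x : ℕ × ℕ | (x.1 + 1, x.2) ∈ S}) := by
    rw [Set.disjoint_left]
    rintro _ ⟨c, -, rfl⟩ ⟨⟨r, c'⟩, -, h⟩
    simp at h
  rw [hsplit] at hS
  have := Set.ncard_union_eq hdisj (hS.subset Set.subset_union_left)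
    (hS.subset Set.subset_union_right)
  rw [← hsplit, Set.ncard_image_of_injective _ (Prod.mk_right_injective 0),
    Set.ncard_image_of_injective _ hinj] at this
  exact this

/-- The weakly increasing row with `a v` entries `v` for each `v < k`, followed by entries `k`. -/
noncomputable def fillRow (a : ℕ → ℕ) (k c : ℕ) : ℕ :=
  Nat.findGreatest (fun v => ∑ w ∈ range v, a w ≤ c) k

section FillRow

variable (a : ℕ → ℕ) (k : ℕ)

theorem fillRow_le (c : ℕ) : fillRow a k c ≤ k := Nat.findGreatest_le k

theorem fillRow_mono : Monotone (fillRow a k) := fun _ _ h =>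
  Nat.findGreatest_mono_left (fun _ hv => hv.trans h) k

variable {a k}

theorem monotone_sum_range : Monotone fun v => ∑ w ∈ range v, a w := fun _ _ h =>
  sum_le_sum_of_subset (range_subset_range.2 h)

theorem fillRow_eq_zero {c : ℕ} (hc : c < a 0) : fillRow a k c = 0 :=
  Nat.findGreatest_eq_zero_iff.2 fun v hv _ hle => by
    have : a 0 ≤ ∑ w ∈ range v, a w := by simpa using monotone_sum_range (a := a) hv
    omega

theorem fillRow_eq_iff {c v : ℕ} (hc : c < ∑ w ∈ range (k + 1), a w) (hv : v ≤ k) :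
    fillRow a k c = v ↔ ∑ w ∈ range v, a w ≤ c ∧ c < ∑ w ∈ range (v + 1), a w := by
  rw [fillRow, Nat.findGreatest_eq_iff]
  constructor
  · rintro ⟨-, hle, hgt⟩
    refine ⟨?_, ?_⟩
    · rcases v with _ | v
      · simp
      · exact hle (Nat.succ_ne_zero v)
    · rcases hv.lt_or_eq with hv | rfl
      · exact not_le.1 (hgt v.lt_succ_self hv)
      · exact hc
  · rintro ⟨hle, hlt⟩
    exact ⟨hv, fun _ => hle, fun u hu _ h => (hlt.trans_le (monotone_sum_range hu)).not_ge h⟩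

theorem card_filter_fillRow_eq {v : ℕ} (hv : v ≤ k) :
    #{c ∈ range (∑ w ∈ range (k + 1), a w) | fillRow a k c = v} = a v := by
  have hsub : ∑ w ∈ range (v + 1), a w ≤ ∑ w ∈ range (k + 1), a w :=
    monotone_sum_range (by omega)
  have : {c ∈ range (∑ w ∈ range (k + 1), a w) | fillRow a k c = v} =
      Ico (∑ w ∈ range v, a w) (∑ w ∈ range (v + 1), a w) := by
    ext c
    simp only [mem_filter, mem_range, mem_Ico]
    constructor
    · rintro ⟨hc, h⟩
      exact (fillRow_eq_iff hc hv).1 h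
    · rintro ⟨h₁, h₂⟩
      exact ⟨h₂.trans_le hsub, (fillRow_eq_iff (h₂.trans_le hsub) hv).2 ⟨h₁, h₂⟩⟩
  rw [this, Nat.card_Ico, sum_range_succ, Nat.add_sub_cancel_left]

end FillRow

def cells (p : ℕ → ℕ) : Set (ℕ × ℕ) := {x | x.2 < p x.1}

def consRow (m : ℕ) (p : ℕ → ℕ) (r : ℕ) : ℕ := if r = 0 then m else p (r - 1)

@[simp] theorem consRow_zero (m : ℕ) (p : ℕ → ℕ) : consRow m p 0 = m := rfl
@[simp] theorem consRow_succ (m : ℕ) (p : ℕ → ℕ) (r : ℕ) : consRow m p (r + 1) = p r :=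
  rfl

namespace IsPartition

variable {p : ℕ → ℕ}

theorem antitone (hp : IsPartition p) : Antitone p := antitone_nat_of_succ_le hp.1

theorem eq_zero_of_le {N r : ℕ} (hp : IsPartition p) (hN : p N = 0) (h : N ≤ r) : p r = 0 :=
  Nat.eq_zero_of_le_zero (hN ▸ hp.antitone h)

theorem tail (hp : IsPartition p) : IsPartition (fun r => p (r + 1)) :=
  ⟨fun i => hp.1 (i + 1), hp.2.imp fun _ hN => hp.eq_zero_of_le hN (Nat.le_succ _)⟩

theorem consRow_of_le {m : ℕ} (hp : IsPartition p) (hm : p 0 ≤ m) : IsPartition (consRow m p) :=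
  ⟨by rintro (_ | i); exacts [hm, hp.1 i], let ⟨N, hN⟩ := hp.2; ⟨N + 1, hN⟩⟩

theorem finite_cells (hp : IsPartition p) : (cells p).Finite := by
  obtain ⟨N, hN⟩ := hp.2
  refine ((Set.finite_Iio N).prod (Set.finite_Iio (p 0))).subset fun x (hx : x.2 < p x.1) => ?_
  refine ⟨show x.1 < N from not_le.1 fun h => ?_, hx.trans_le (hp.antitone (Nat.zero_le _))⟩
  rw [hp.eq_zero_of_le hN h] at hx
  exact Nat.not_lt_zero _ hx

theorem ncard_cells_eq_sum_range {N : ℕ} (hp : IsPartition p) (hN : p N = 0) :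
    (cells p).ncard = ∑ r ∈ range N, p r := by
  induction N generalizing p with
  | zero =>
    have : cells p = ∅ := Set.eq_empty_of_forall_notMem fun x (hx : x.2 < p x.1) => by
      have := hp.antitone (Nat.zero_le x.1)
      omega
    simp [this]
  | succ N ih =>
    rw [hp.finite_cells.ncard_eq_ncard_zero_add_ncard_succ, sum_range_succ',
      ← ih hp.tail hN, add_comm]
    congr 1
    exact Set.ncard_Iio_nat (p 0)

theorem psize_eq_sum_range {N : ℕ} (hp : IsPartition p) (hN : p N = 0) :
    psize p = ∑ r ∈ range N, p r :=
  finsum_eq_sum_of_support_subset p fun r hr => by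
    simpa using mt (fun h => hp.eq_zero_of_le hN (not_lt.1 h)) hr

theorem ncard_cells (hp : IsPartition p) : (cells p).ncard = psize p := by
  obtain ⟨N, hN⟩ := hp.2
  rw [hp.ncard_cells_eq_sum_range hN, hp.psize_eq_sum_range hN]

theorem le_psize (hp : IsPartition p) (r : ℕ) : p r ≤ psize p := by
  obtain ⟨N, hN⟩ := hp.2
  rw [hp.psize_eq_sum_range (hp.eq_zero_of_le hN (le_max_left N (r + 1)))]
  exact single_le_sum (fun _ _ => Nat.zero_le _) (mem_range.2 (by omega))

theorem consRow_mul_psize {n : ℕ} (hp : IsPartition p) (hn : 0 < n) :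
    IsPartition (consRow (n * psize p) p) :=
  hp.consRow_of_le ((hp.le_psize 0).trans (Nat.le_mul_of_pos_left _ hn))

end IsPartition

noncomputable def entryCount (p : ℕ → ℕ) (e : ℕ → ℕ → ℕ) (v : ℕ) : ℕ :=
  Nat.card {x : ℕ × ℕ | x.2 < p x.1 ∧ e x.1 x.2 = v}

section EntryCount

variable {p : ℕ → ℕ} {e : ℕ → ℕ → ℕ}

theorem entryCount_congr {e' : ℕ → ℕ → ℕ} {v v' : ℕ}
    (h : ∀ r c, c < p r → (e r c = v ↔ e' r c = v')) :
    entryCount p e v = entryCount p e' v' := by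
  unfold entryCount
  congr 2
  ext x
  exact and_congr_right (h x.1 x.2)

theorem entryCount_eq_zero_iff (hp : (cells p).Finite) {v : ℕ} :
    entryCount p e v = 0 ↔ ∀ r c, c < p r → e r c ≠ v := by
  rw [entryCount, Nat.card_coe_set_eq, Set.ncard_eq_zero (hp.subset fun x hx => hx.1)]
  simp [Set.eq_empty_iff_forall_notMem]

theorem entryCount_le (hp : (cells p).Finite) (v : ℕ) : entryCount p e v ≤ (cells p).ncard := by
  rw [entryCount, Nat.card_coe_set_eq]
  exact Set.ncard_le_ncard (fun x hx => hx.1) hp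

theorem entryCount_eq_card_filter (hp : (cells p).Finite) (v : ℕ) :
    entryCount p e v = #{x ∈ hp.toFinset | e x.1 x.2 = v} := by
  rw [entryCount, Nat.card_coe_set_eq, ← Set.ncard_coe_finset]
  congr 1
  ext x
  simp [cells]

theorem sum_range_entryCount_eq_ncard (hp : (cells p).Finite) {k : ℕ}
    (he : ∀ r c, c < p r → e r c < k) :
    ∑ v ∈ range k, entryCount p e v = (cells p).ncard := by
  rw [Set.ncard_eq_toFinset_card _ hp, card_eq_sum_card_fiberwise (t := range k)
    (f := fun x => e x.1 x.2) fun x hx => mem_range.2 (he _ _ (hp.mem_toFinset.1 hx))]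
  exact sum_congr rfl fun v _ => entryCount_eq_card_filter hp v

theorem entryCount_eq_card_filter_add (hp : (cells p).Finite) (v : ℕ) :
    entryCount p e v = #{c ∈ range (p 0) | e 0 c = v} +
      entryCount (fun r => p (r + 1)) (fun r c => e (r + 1) c) v := by
  rw [entryCount, Nat.card_coe_set_eq,
    (hp.subset fun x hx => hx.1).ncard_eq_ncard_zero_add_ncard_succ, ← Set.ncard_coe_finset,
    entryCount, Nat.card_coe_set_eq]
  congr 2
  ext c
  simp

end EntryCount

attribute [ext] SSYT SSYTContent

namespace SSYT

variable {p : ℕ → ℕ} {n : ℕ} (T : SSYT p n)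

theorem entryCount_zero (hp : (cells p).Finite) : entryCount p T.entry 0 = 0 :=
  (entryCount_eq_zero_iff hp).2 fun r c hc => Nat.one_le_iff_ne_zero.1 (T.pos r c hc)

theorem sum_range_entryCount (hp : IsPartition p) :
    ∑ v ∈ range (n + 1), entryCount p T.entry v = psize p := by
  rw [sum_range_entryCount_eq_ncard hp.finite_cells fun r c hc =>
    Nat.lt_succ_of_le (T.le_bound r c hc), hp.ncard_cells]

/-- How many entries `v + 1` the new top row must supply for the content `(|λ|^{n+1})`. -/
noncomputable def topRowCount (v : ℕ) : ℕ := psize p - entryCount p T.entry v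

theorem sum_range_topRowCount (hp : IsPartition p) :
    ∑ v ∈ range (n + 1), T.topRowCount v = n * psize p := by
  have hle : ∀ v ∈ range (n + 1), entryCount p T.entry v ≤ psize p := fun v _ =>
    hp.ncard_cells ▸ entryCount_le hp.finite_cells v
  unfold topRowCount
  rw [sum_tsub_distrib _ hle, sum_const, card_range, T.sum_range_entryCount hp,
    smul_eq_mul, Nat.succ_mul, Nat.add_sub_cancel]

noncomputable def extendEntry : ℕ → ℕ → ℕ
  | 0, c => if c < n * psize p then fillRow T.topRowCount n c + 1 else 0
  | r + 1, c => if c < p r then T.entry r c + 1 else 0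

theorem extendEntry_zero_eq_one (hp : IsPartition p) (hn : 0 < n) {c : ℕ} (hc : c < psize p) :
    T.extendEntry 0 c = 1 := by
  have hc' : c < T.topRowCount 0 := by rwa [topRowCount, T.entryCount_zero hp.finite_cells]
  simp [extendEntry, hc.trans_le (Nat.le_mul_of_pos_left _ hn), fillRow_eq_zero hc']

theorem entryCount_extendEntry (hp : IsPartition p) (hn : 0 < n) (i : ℕ) :
    entryCount (consRow (n * psize p) p) T.extendEntry (i + 1) =
      if i < n + 1 then psize p else 0 := by
  have hlower : entryCount (fun r => consRow (n * psize p) p (r + 1))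
      (fun r c => T.extendEntry (r + 1) c) (i + 1) = entryCount p T.entry i :=
    entryCount_congr fun r c hc => by simp [extendEntry, show c < p r from hc]
  have htop : #{c ∈ range (n * psize p) | T.extendEntry 0 c = i + 1} =
      #{c ∈ range (∑ v ∈ range (n + 1), T.topRowCount v) |
        fillRow T.topRowCount n c = i} := by
    rw [T.sum_range_topRowCount hp]
    exact congrArg card (filter_congr fun c hc => by simp [extendEntry, mem_range.1 hc])
  rw [entryCount_eq_card_filter_add (hp.consRow_mul_psize hn).finite_cells,
    consRow_zero, hlower, htop]
  split_ifs with hi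
  · have := hp.ncard_cells ▸ entryCount_le (e := T.entry) hp.finite_cells i
    rw [card_filter_fillRow_eq (by omega), topRowCount]
    omega
  · have htop0 : #{c ∈ range (∑ v ∈ range (n + 1), T.topRowCount v) |
        fillRow T.topRowCount n c = i} = 0 :=
      card_eq_zero.2 <| filter_eq_empty_iff.2 fun c _ h => by
        have := fillRow_le T.topRowCount n c
        omega
    have hlow0 : entryCount p T.entry i = 0 := (entryCount_eq_zero_iff hp.finite_cells).2
      fun r c hc h => by
        have := T.le_bound r c hc
        omega
    rw [htop0, hlow0]

noncomputable def addTopRow (hp : IsPartition p) (hn : 0 < n) :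
    SSYTContent (consRow (n * psize p) p) (fun i => if i < n + 1 then psize p else 0) where
  entry := T.extendEntry
  pos := by
    rintro (_ | r) c hc <;> simp_all [extendEntry]
  row_weak := by
    rintro (_ | r) c₁ c₂ h hc₂
    · simp only [consRow_zero] at hc₂
      simp only [extendEntry, if_pos hc₂, if_pos (h.trans_lt hc₂)]
      exact Nat.succ_le_succ (fillRow_mono _ _ h)
    · simp only [consRow_succ] at hc₂
      simp only [extendEntry, if_pos hc₂, if_pos (h.trans_lt hc₂)]
      exact Nat.succ_le_succ (T.row_weak r c₁ c₂ h hc₂)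
  col_strict := by
    rintro r₁ (_ | r₂) c h hc
    · omega
    replace hc : c < p r₂ := hc
    rcases r₁ with _ | r₁
    · have hcS : c < psize p :=
        hc.trans_le ((hp.antitone (Nat.zero_le r₂)).trans (hp.le_psize 0))
      rw [T.extendEntry_zero_eq_one hp hn hcS]
      simp only [extendEntry, if_pos hc]
      exact Nat.succ_lt_succ (T.pos r₂ c hc)
    · have hc₁ : c < p r₁ := hc.trans_le (hp.antitone (by omega))
      simp only [extendEntry, if_pos hc, if_pos hc₁]
      exact Nat.succ_lt_succ (T.col_strict r₁ r₂ c (by omega) hc)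
  zero_outside := by
    rintro (_ | r) c hc <;> simp_all [extendEntry]
  content := T.entryCount_extendEntry hp hn

end SSYT

namespace SSYTContent

variable {q μ : ℕ → ℕ}

theorem monotoneOn_entry (U : SSYTContent q μ) (r : ℕ) :
    MonotoneOn (U.entry r) (Set.Iio (q r)) :=
  fun c₁ _ c₂ hc₂ h => U.row_weak r c₁ c₂ h hc₂

theorem lt_entry (U : SSYTContent q μ) (hq : Antitone q) {r c : ℕ} (hc : c < q r) :
    r < U.entry r c := by
  induction r with
  | zero => exact U.pos 0 c hc
  | succ r ih =>
    exact lt_of_le_of_lt (ih (hc.trans_le (hq r.le_succ)))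
      (U.col_strict r (r + 1) c r.lt_succ_self hc)

theorem entry_le (U : SSYTContent q μ) (hq : (cells q).Finite) {k : ℕ}
    (hμ : ∀ i, k ≤ i → μ i = 0) {r c : ℕ} (hc : c < q r) : U.entry r c ≤ k := by
  by_contra! h
  have hi : U.entry r c = U.entry r c - 1 + 1 := by omega
  exact (entryCount_eq_zero_iff hq).1 ((U.content _).trans (hμ _ (by omega))) r c hc hi

theorem ext_of_entry_succ (hq : (cells q).Finite) {U V : SSYTContent q μ}
    (h : ∀ r c, U.entry (r + 1) c = V.entry (r + 1) c) : U = V := by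
  have hcount : ∀ w, entryCount q U.entry w = entryCount q V.entry w := by
    rintro (_ | i)
    · rw [(entryCount_eq_zero_iff hq).2 fun r c hc => Nat.one_le_iff_ne_zero.1 (U.pos r c hc),
        (entryCount_eq_zero_iff hq).2 fun r c hc => Nat.one_le_iff_ne_zero.1 (V.pos r c hc)]
    · exact (U.content i).trans (V.content i).symm
  have hlower : (fun r c => U.entry (r + 1) c) = fun r c => V.entry (r + 1) c := funext₂ h
  have hrow : Set.EqOn (U.entry 0) (V.entry 0) (Set.Iio (q 0)) :=
    eqOn_Iio_of_card_filter_eq (U.monotoneOn_entry 0) (V.monotoneOn_entry 0) fun w => by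
      have := hcount w
      rw [entryCount_eq_card_filter_add hq, entryCount_eq_card_filter_add hq, hlower] at this
      omega
  ext (_ | r) c
  · by_cases hc : c < q 0
    · exact hrow hc
    · rw [U.zero_outside 0 c (not_lt.1 hc), V.zero_outside 0 c (not_lt.1 hc)]
  · exact h r c

variable {p : ℕ → ℕ} {n : ℕ}
  (U : SSYTContent (consRow (n * psize p) p) (fun i => if i < n + 1 then psize p else 0))

theorem two_le_entry_succ (hp : IsPartition p) (hn : 0 < n) {r c : ℕ} (hc : c < p r) :
    2 ≤ U.entry (r + 1) c :=
  le_trans (Nat.le_add_left 2 r) (U.lt_entry (hp.consRow_mul_psize hn).antitone hc)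

def removeTopRow (hp : IsPartition p) (hn : 0 < n) : SSYT p n where
  entry r c := U.entry (r + 1) c - 1
  pos r c hc := by
    have := U.two_le_entry_succ hp hn hc
    omega
  le_bound r c hc := by
    have := U.entry_le (hp.consRow_mul_psize hn).finite_cells (k := n + 1)
      (fun i hi => if_neg (by omega)) (r := r + 1) hc
    omega
  row_weak r c₁ c₂ h hc₂ := Nat.sub_le_sub_right (U.row_weak (r + 1) c₁ c₂ h hc₂) 1
  col_strict r₁ r₂ c h hc := by
    have := U.col_strict (r₁ + 1) (r₂ + 1) c (by omega) hc
    have := U.two_le_entry_succ hp hn (hc.trans_le (hp.antitone h.le))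
    omega
  zero_outside r c hc := by simp [U.zero_outside (r + 1) c hc]

end SSYTContent

noncomputable def ssytEquivSSYTContent {p : ℕ → ℕ} {n : ℕ} (hp : IsPartition p)
    (hn : 0 < n) :
    SSYT p n ≃
      SSYTContent (consRow (n * psize p) p) (fun i => if i < n + 1 then psize p else 0) where
  toFun T := T.addTopRow hp hn
  invFun U := U.removeTopRow hp hn
  left_inv T := by
    ext r c
    change T.extendEntry (r + 1) c - 1 = T.entry r c
    by_cases hc : c < p r
    · simp [SSYT.extendEntry, hc]
    · simp [SSYT.extendEntry, hc, T.zero_outside r c (not_lt.1 hc)]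
  right_inv U := SSYTContent.ext_of_entry_succ (hp.consRow_mul_psize hn).finite_cells
    fun r c => by
      change (if c < p r then U.entry (r + 1) c - 1 + 1 else 0) = U.entry (r + 1) c
      by_cases hc : c < p r
      · have := U.two_le_entry_succ hp hn hc
        rw [if_pos hc]
        omega
      · rw [if_neg hc, U.zero_outside (r + 1) c (not_lt.1 hc)]

theorem card_ssyt_eq_card_ssyt_content_general
    (p : ℕ → ℕ) (hp : IsPartition p) (n : ℕ) (hn : 0 < n) :
    Nat.card (SSYT p n) =
      Nat.card (SSYTContent
        (fun r => if r = 0 then n * psize p else p (r - 1))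
        (fun i => if i < n + 1 then psize p else 0)) :=
  Nat.card_congr (ssytEquivSSYTContent hp hn)

/-- For a nonempty partition `λ` and a positive integer `n`, the number of semistandard
Young tableaux of shape `λ` with entries in `{1, …, n}` equals the number of semistandard
Young tableaux of shape `λ̃ = (n·|λ|, λ₁, λ₂, …)` and content `μ = (|λ|^{n+1})`. -/
theorem card_ssyt_eq_card_ssyt_content
    (p : ℕ → ℕ) (hp : IsPartition p) (hne : 0 < psize p) (n : ℕ) (hn : 0 < n) :
    Nat.card (SSYT p n) =
      Nat.card (SSYTContent
        (fun r => if r = 0 then n * psize p else p (r - 1))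
        (fun i => if i < n + 1 then psize p else 0)) :=
  card_ssyt_eq_card_ssyt_content_general p hp n hn
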